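/- (Negativity of the weighted Rayleigh quotient under a doubling bound.) Let n ≥ 1 and set R_d = 2^{n+4}. Let μ be a Radon measure on ℝ^{n+1} satisfying μ(B_{R_d/2}) > 0 and μ(B_{R_d}) ≤ 2^{2n+3} μ(B_{R_d/2}). Then, with φ(x) = 1 for |x| < R_d/2, φ(x) = 2 − (2/R_d)|x| for R_d/2 ≤ |x| < R_d, and φ(x) = 0 for |x| ≥ R_d, one has (4/R_d²) ∫_{B_{R_d} \ B_{R_d/2}} Φ dμ − (1/2) ∫ φ² Φ dμ ≤ (2^{2n+5}/R_d² − 1/2) e^{−R_d²/16} μ(B_{R_d/2}) < 0. -/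

import Mathlib

/-!
The Gaussian weight is at most `e^{-R²/16}` on the annulus `B_R \ B_{R/2}` and at least
`e^{-R²/16}` on `B_{R/2}`, where the cutoff equals `1`. The doubling bound therefore turns the
annulus term into at most `2^{2n+5}/R² · e^{-R²/16} μ(B_{R/2})`, while the `φ²Φ` term is at least
`½ e^{-R²/16} μ(B_{R/2})`; for `R = 2^{n+4}` the ratio `2^{2n+5}/R²` equals `1/8 < 1/2`.
-/

open MeasureTheory Metric

/-- The Gaussian weight `Φ(x) = exp(-|x|²/4)` on `ℝ^{n+1}`. -/
noncomputable def Phi (n : ℕ) (x : EuclideanSpace ℝ (Fin (n + 1))) : ℝ :=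
  Real.exp (-‖x‖ ^ 2 / 4)

/-- The radial cutoff function `φ` at scale `R_d`: equal to `1` on `B_{R_d/2}`, affinely
interpolating to `0` on the annulus `B_{R_d} \ B_{R_d/2}`, and `0` outside `B_{R_d}`. -/
noncomputable def cutoff (n : ℕ) (Rd : ℝ) (x : EuclideanSpace ℝ (Fin (n + 1))) : ℝ :=
  if ‖x‖ < Rd / 2 then 1
  else if ‖x‖ < Rd then 2 - (2 / Rd) * ‖x‖
  else 0

section Gaussian

variable {n : ℕ}

lemma Phi_nonneg (x : EuclideanSpace ℝ (Fin (n + 1))) : 0 ≤ Phi n x :=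
  (Real.exp_pos _).le

lemma Phi_le_one (x : EuclideanSpace ℝ (Fin (n + 1))) : Phi n x ≤ 1 :=
  Real.exp_le_one_iff.2 (by nlinarith [sq_nonneg ‖x‖])

lemma continuous_Phi : Continuous (Phi n) := by
  unfold Phi; fun_prop

lemma Phi_le_of_le_norm {r : ℝ} (hr : 0 ≤ r) {x : EuclideanSpace ℝ (Fin (n + 1))}
    (hx : r ≤ ‖x‖) : Phi n x ≤ Real.exp (-r ^ 2 / 4) :=
  Real.exp_le_exp.2 (by nlinarith)

lemma exp_le_Phi_of_norm_le {r : ℝ} {x : EuclideanSpace ℝ (Fin (n + 1))} (hx : ‖x‖ ≤ r) :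
    Real.exp (-r ^ 2 / 4) ≤ Phi n x :=
  Real.exp_le_exp.2 (by nlinarith [norm_nonneg x])

variable {μ : Measure (EuclideanSpace ℝ (Fin (n + 1)))} {s : Set (EuclideanSpace ℝ (Fin (n + 1)))}

lemma integrableOn_Phi (hs : μ s ≠ ⊤) : IntegrableOn (Phi n) s μ :=
  Measure.integrableOn_of_bounded hs continuous_Phi.aestronglyMeasurable
    (.of_forall fun x => by rw [Real.norm_of_nonneg (Phi_nonneg x)]; exact Phi_le_one x)

lemma setIntegral_Phi_le {r : ℝ} (hr : 0 ≤ r) (hs : μ s ≠ ⊤) (hrs : ∀ x ∈ s, r ≤ ‖x‖) :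
    ∫ x in s, Phi n x ∂μ ≤ Real.exp (-r ^ 2 / 4) * μ.real s :=
  (Real.le_norm_self _).trans <| norm_setIntegral_le_of_norm_le_const hs.lt_top fun x hx => by
    rw [Real.norm_of_nonneg (Phi_nonneg x)]; exact Phi_le_of_le_norm hr (hrs x hx)

lemma exp_mul_le_setIntegral_Phi {r : ℝ} (hsm : MeasurableSet s) (hs : μ s ≠ ⊤)
    (hrs : ∀ x ∈ s, ‖x‖ ≤ r) :
    Real.exp (-r ^ 2 / 4) * μ.real s ≤ ∫ x in s, Phi n x ∂μ :=
  setIntegral_ge_of_const_le_real hsm hs (fun x hx => exp_le_Phi_of_norm_le (hrs x hx))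
    (integrableOn_Phi hs)

end Gaussian

section Cutoff

variable {n : ℕ} {R : ℝ} {x : EuclideanSpace ℝ (Fin (n + 1))}

lemma cutoff_of_norm_lt (hx : ‖x‖ < R / 2) : cutoff n R x = 1 := if_pos hx

lemma cutoff_of_le_norm (hR : 0 ≤ R) (hx : R ≤ ‖x‖) : cutoff n R x = 0 := by
  rw [cutoff, if_neg (by linarith), if_neg hx.not_gt]

lemma cutoff_nonneg (hR : 0 < R) : 0 ≤ cutoff n R x := by
  unfold cutoff
  split_ifs with h₁ h₂
  · exact zero_le_one
  · rw [sub_nonneg, div_mul_eq_mul_div, div_le_iff₀ hR]; linarith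
  · exact le_rfl

lemma cutoff_le_one (hR : 0 < R) : cutoff n R x ≤ 1 := by
  unfold cutoff
  split_ifs with h₁ h₂
  · exact le_rfl
  · rw [sub_le_comm, div_mul_eq_mul_div, le_div_iff₀ hR]; linarith
  · exact zero_le_one

lemma measurable_cutoff : Measurable (cutoff n R) :=
  Measurable.ite (measurableSet_lt measurable_norm measurable_const) measurable_const
    (Measurable.ite (measurableSet_lt measurable_norm measurable_const)
      (measurable_const.sub (measurable_const.mul measurable_norm)) measurable_const)

variable (μ : Measure (EuclideanSpace ℝ (Fin (n + 1)))) [IsLocallyFiniteMeasure μ]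

lemma integrable_cutoff_sq_mul_Phi (hR : 0 < R) :
    Integrable (fun x => cutoff n R x ^ 2 * Phi n x) μ := by
  refine IntegrableOn.integrable_of_forall_notMem_eq_zero (s := ball 0 R) ?_ fun x hx => ?_
  · refine Measure.integrableOn_of_bounded measure_ball_lt_top.ne
      ((measurable_cutoff.pow_const 2).mul continuous_Phi.measurable).aestronglyMeasurable
      (M := 1) (.of_forall fun x => ?_)
    rw [Real.norm_of_nonneg (mul_nonneg (sq_nonneg _) (Phi_nonneg x))]
    exact mul_le_one₀ (pow_le_one₀ (cutoff_nonneg hR) (cutoff_le_one hR)) (Phi_nonneg x)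
      (Phi_le_one x)
  · rw [mem_ball_zero_iff, not_lt] at hx
    rw [cutoff_of_le_norm hR.le hx]; ring

lemma setIntegral_Phi_le_integral_cutoff_sq_mul_Phi (hR : 0 < R) :
    ∫ x in ball 0 (R / 2), Phi n x ∂μ ≤ ∫ x, cutoff n R x ^ 2 * Phi n x ∂μ := calc
  ∫ x in ball 0 (R / 2), Phi n x ∂μ = ∫ x in ball 0 (R / 2), cutoff n R x ^ 2 * Phi n x ∂μ :=
    setIntegral_congr_fun measurableSet_ball fun x hx => by
      rw [cutoff_of_norm_lt (mem_ball_zero_iff.1 hx), one_pow, one_mul]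
  _ ≤ ∫ x, cutoff n R x ^ 2 * Phi n x ∂μ :=
    setIntegral_le_integral (integrable_cutoff_sq_mul_Phi μ hR)
      (.of_forall fun x => mul_nonneg (sq_nonneg _) (Phi_nonneg x))

end Cutoff

theorem rayleigh_numerator_le_of_doubling {n : ℕ}
    (μ : Measure (EuclideanSpace ℝ (Fin (n + 1)))) [IsLocallyFiniteMeasure μ] {R C : ℝ} (hR : 0 < R)
    (hdoub : μ.real (ball 0 R) ≤ C * μ.real (ball 0 (R / 2))) :
    4 / R ^ 2 * ∫ x in ball 0 R \ ball 0 (R / 2), Phi n x ∂μ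
        - 1 / 2 * ∫ x, cutoff n R x ^ 2 * Phi n x ∂μ
      ≤ (4 * C / R ^ 2 - 1 / 2) * Real.exp (-R ^ 2 / 16) * μ.real (ball 0 (R / 2)) := by
  have hexp : Real.exp (-(R / 2) ^ 2 / 4) = Real.exp (-R ^ 2 / 16) := by ring_nf
  have hannulus : ∫ x in ball 0 R \ ball 0 (R / 2), Phi n x ∂μ
      ≤ Real.exp (-R ^ 2 / 16) * (C * μ.real (ball 0 (R / 2))) := by
    refine (setIntegral_Phi_le (half_pos hR).le (measure_ne_top_of_subset Set.sdiff_subset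
      measure_ball_lt_top.ne) fun x hx => ?_).trans ?_
    · simpa using hx.2
    · rw [← hexp]
      gcongr
      exact (measureReal_mono Set.sdiff_subset).trans hdoub
  have hinner : Real.exp (-R ^ 2 / 16) * μ.real (ball 0 (R / 2))
      ≤ ∫ x, cutoff n R x ^ 2 * Phi n x ∂μ := by
    rw [← hexp]
    exact (exp_mul_le_setIntegral_Phi measurableSet_ball measure_ball_lt_top.ne
      fun x hx => (mem_ball_zero_iff.1 hx).le).trans
      (setIntegral_Phi_le_integral_cutoff_sq_mul_Phi μ hR)
  calc _ ≤ 4 / R ^ 2 * (Real.exp (-R ^ 2 / 16) * (C * μ.real (ball 0 (R / 2))))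
        - 1 / 2 * (Real.exp (-R ^ 2 / 16) * μ.real (ball 0 (R / 2))) := by
          gcongr
    _ = _ := by ring

theorem rayleigh_negative_of_doubling_general (n : ℕ)
    (μ : Measure (EuclideanSpace ℝ (Fin (n + 1)))) [IsLocallyFiniteMeasure μ]
    (hpos : 0 < μ (ball (0 : EuclideanSpace ℝ (Fin (n + 1))) ((2 : ℝ) ^ (n + 4) / 2)))
    (hdoub : μ (ball (0 : EuclideanSpace ℝ (Fin (n + 1))) ((2 : ℝ) ^ (n + 4))) ≤
      2 ^ (2 * n + 3) *
        μ (ball (0 : EuclideanSpace ℝ (Fin (n + 1))) ((2 : ℝ) ^ (n + 4) / 2))) :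
    (4 / ((2 : ℝ) ^ (n + 4)) ^ 2) *
        (∫ x in ball (0 : EuclideanSpace ℝ (Fin (n + 1))) ((2 : ℝ) ^ (n + 4)) \
          ball (0 : EuclideanSpace ℝ (Fin (n + 1))) ((2 : ℝ) ^ (n + 4) / 2),
          Phi n x ∂μ) -
      (1 / 2) * (∫ x, (cutoff n ((2 : ℝ) ^ (n + 4)) x) ^ 2 * Phi n x ∂μ) ≤
      ((2 : ℝ) ^ (2 * n + 5) / ((2 : ℝ) ^ (n + 4)) ^ 2 - 1 / 2) *
        Real.exp (-((2 : ℝ) ^ (n + 4)) ^ 2 / 16) *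
        (μ (ball (0 : EuclideanSpace ℝ (Fin (n + 1))) ((2 : ℝ) ^ (n + 4) / 2))).toReal ∧
    ((2 : ℝ) ^ (2 * n + 5) / ((2 : ℝ) ^ (n + 4)) ^ 2 - 1 / 2) *
        Real.exp (-((2 : ℝ) ^ (n + 4)) ^ 2 / 16) *
        (μ (ball (0 : EuclideanSpace ℝ (Fin (n + 1))) ((2 : ℝ) ^ (n + 4) / 2))).toReal
      < 0 := by
  have hdoub_real : μ.real (ball 0 (2 ^ (n + 4)))
      ≤ 2 ^ (2 * n + 3) * μ.real (ball 0 (2 ^ (n + 4) / 2)) := by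
    simpa [Measure.real, ENNReal.toReal_mul] using
      ENNReal.toReal_mono (ENNReal.mul_ne_top (by simp) measure_ball_lt_top.ne) hdoub
  have hcoef : (2 : ℝ) ^ (2 * n + 5) = 4 * 2 ^ (2 * n + 3) := by ring
  have hratio : (2 : ℝ) ^ (2 * n + 5) / ((2 : ℝ) ^ (n + 4)) ^ 2 = 1 / 8 := by
    rw [div_eq_iff (by positivity)]; ring
  refine ⟨hcoef ▸ rayleigh_numerator_le_of_doubling μ (by positivity) hdoub_real, ?_⟩
  rw [hratio]
  have hball : 0 < μ.real (ball 0 (2 ^ (n + 4) / 2)) :=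
    ENNReal.toReal_pos hpos.ne' measure_ball_lt_top.ne
  exact mul_neg_of_neg_of_pos (mul_neg_of_neg_of_pos (by norm_num) (Real.exp_pos _)) hball

theorem rayleigh_negative_of_doubling (n : ℕ) (hn : 1 ≤ n)
    (μ : Measure (EuclideanSpace ℝ (Fin (n + 1)))) [IsLocallyFiniteMeasure μ]
    (hpos : 0 < μ (ball (0 : EuclideanSpace ℝ (Fin (n + 1))) ((2 : ℝ) ^ (n + 4) / 2)))
    (hdoub : μ (ball (0 : EuclideanSpace ℝ (Fin (n + 1))) ((2 : ℝ) ^ (n + 4))) ≤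
      2 ^ (2 * n + 3) *
        μ (ball (0 : EuclideanSpace ℝ (Fin (n + 1))) ((2 : ℝ) ^ (n + 4) / 2))) :
    (4 / ((2 : ℝ) ^ (n + 4)) ^ 2) *
        (∫ x in ball (0 : EuclideanSpace ℝ (Fin (n + 1))) ((2 : ℝ) ^ (n + 4)) \
          ball (0 : EuclideanSpace ℝ (Fin (n + 1))) ((2 : ℝ) ^ (n + 4) / 2),
          Phi n x ∂μ) -
      (1 / 2) * (∫ x, (cutoff n ((2 : ℝ) ^ (n + 4)) x) ^ 2 * Phi n x ∂μ) ≤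
      ((2 : ℝ) ^ (2 * n + 5) / ((2 : ℝ) ^ (n + 4)) ^ 2 - 1 / 2) *
        Real.exp (-((2 : ℝ) ^ (n + 4)) ^ 2 / 16) *
        (μ (ball (0 : EuclideanSpace ℝ (Fin (n + 1))) ((2 : ℝ) ^ (n + 4) / 2))).toReal ∧
    ((2 : ℝ) ^ (2 * n + 5) / ((2 : ℝ) ^ (n + 4)) ^ 2 - 1 / 2) *
        Real.exp (-((2 : ℝ) ^ (n + 4)) ^ 2 / 16) *
        (μ (ball (0 : EuclideanSpace ℝ (Fin (n + 1))) ((2 : ℝ) ^ (n + 4) / 2))).toReal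
      < 0 :=
  rayleigh_negative_of_doubling_general n μ hpos hdoub
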